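/- Let A ∈ ℝ^{m×n} with SVD A = Ũ Σ Ṽᵀ, r = min(m,n), let μ be a probability measure on ℝ^n with ∫‖x‖² dμ(x) < ∞, and let p₁,…,p_r > 0 with ∑_b p_b = 1. Define F(U,V) = ∫ ∑_{b=1}^r p_b ‖U_{:b}V_{:b}ᵀ x − A x‖² dμ(x) for U ∈ ℝ^{m×r}, V ∈ ℝ^{n×r}, and H(Ū,V̄) = ∫ ∑_{b=1}^r p_b ‖(Ū_{:b}V̄_{:b}ᵀ − I_m) Σ Ṽᵀ x‖² dμ(x) for Ū, V̄ ∈ ℝ^{m×r}. If (Ū,V̄) is a global minimizer of H, then (U*, V*) := (Ũ Ū, Ṽ Σᵀ V̄) is a global minimizer of F. -/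

import Mathlib

open Matrix MeasureTheory

noncomputable section

/-- Squared Euclidean norm of a vector in `ℝ^m`. -/
def sqNorm {m : ℕ} (v : Fin m → ℝ) : ℝ := ∑ i, v i ^ 2

/-- `lrProd b U V = U_{:b} V_{:b}ᵀ`, the product of the submatrices consisting of the
first `b` columns of `U` and of `V`. -/
def lrProd {m n r : ℕ} (b : ℕ) (U : Matrix (Fin m) (Fin r) ℝ)
    (V : Matrix (Fin n) (Fin r) ℝ) : Matrix (Fin m) (Fin n) ℝ :=
  Matrix.of fun i j => ∑ t : Fin r, if (t : ℕ) < b then U i t * V j t else 0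

/-- `F(U,V) = ∫ ∑_{b=1}^r p_b ‖U_{:b}V_{:b}ᵀ x − A x‖² dμ(x)`.
(The index `b : Fin r` stands for the 1-indexed truncation level `b+1 ∈ {1,…,r}`.) -/
def maestroObj {m n r : ℕ} (A : Matrix (Fin m) (Fin n) ℝ)
    (μ : Measure (Fin n → ℝ)) (p : Fin r → ℝ)
    (U : Matrix (Fin m) (Fin r) ℝ) (V : Matrix (Fin n) (Fin r) ℝ) : ℝ :=
  ∫ x, ∑ b : Fin r,
    p b * sqNorm ((lrProd ((b : ℕ) + 1) U V).mulVec x - A.mulVec x) ∂μ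

/-- `H(Ū,V̄) = ∫ ∑_{b=1}^r p_b ‖(Ū_{:b}V̄_{:b}ᵀ − I_m) Σ Ṽᵀ x‖² dμ(x)`,
where `Ū, V̄ ∈ ℝ^{m×r}`. -/
def projObj {m n r : ℕ} (S : Matrix (Fin m) (Fin n) ℝ)
    (Vt : Matrix (Fin n) (Fin n) ℝ) (μ : Measure (Fin n → ℝ)) (p : Fin r → ℝ)
    (U : Matrix (Fin m) (Fin r) ℝ) (V : Matrix (Fin m) (Fin r) ℝ) : ℝ :=
  ∫ x, ∑ b : Fin r,
    p b * sqNorm (((lrProd ((b : ℕ) + 1) U V - 1) * S).mulVec (Vtᵀ.mulVec x)) ∂μ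

/-! ### Auxiliary definitions and lemmas -/

/-- The second-moment matrix of the measure `μ`. -/
def momM {n : ℕ} (μ : Measure (Fin n → ℝ)) : Matrix (Fin n) (Fin n) ℝ :=
  Matrix.of fun j k => ∫ x, x j * x k ∂μ

/-- The quadratic functional `B ↦ ∑ᵢ rowᵢ(B) ⬝ M rowᵢ(B)`. -/
def Qm {m' n : ℕ} (M : Matrix (Fin n) (Fin n) ℝ) (B : Matrix (Fin m') (Fin n) ℝ) : ℝ :=
  ∑ i, B i ⬝ᵥ M.mulVec (B i)

lemma range_tmul {a b : ℕ} (Y : Matrix (Fin a) (Fin b) ℝ) :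
    LinearMap.range (Yᵀ * Y).mulVecLin = LinearMap.range Yᵀ.mulVecLin := by
  apply Submodule.eq_of_le_of_finrank_le
  · rw [Matrix.mulVecLin_mul]
    exact LinearMap.range_comp_le_range _ _
  · change Yᵀ.rank ≤ (Yᵀ * Y).rank
    rw [Matrix.rank_transpose_mul_self, Matrix.rank_transpose]

/-- Existence of an `M`-orthogonal projection onto the column space of `T`,
as a matrix identity. -/
lemma exists_proj {n m' : ℕ} (M : Matrix (Fin n) (Fin n) ℝ) (hM : M.PosSemidef)
    (T : Matrix (Fin n) (Fin m') ℝ) :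
    ∃ X : Matrix (Fin m') (Fin n) ℝ, (Tᵀ * M * T) * X = Tᵀ * M := by
  obtain ⟨R, hRsym, hR2⟩ : ∃ R : Matrix (Fin n) (Fin n) ℝ, Rᵀ = R ∧ R * R = M := by
    open scoped MatrixOrder in
    refine ⟨CFC.sqrt M, ?_, CFC.sqrt_mul_sqrt_self M hM.nonneg⟩
    open scoped MatrixOrder in
    have h := (CFC.sqrt_nonneg M).posSemidef.isHermitian
    rwa [Matrix.IsHermitian, Matrix.conjTranspose_eq_transpose_of_trivial] at h
  set Y := R * T with hY
  have hG : Tᵀ * M * T = Yᵀ * Y := by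
    rw [hY, Matrix.transpose_mul, hRsym, ← hR2, Matrix.mul_assoc, Matrix.mul_assoc,
      Matrix.mul_assoc]
  have hTM : Tᵀ * M = Yᵀ * R := by
    rw [hY, Matrix.transpose_mul, hRsym, ← hR2, Matrix.mul_assoc]
  have hcol : ∀ j : Fin n, ∃ x : Fin m' → ℝ,
      (Yᵀ * Y).mulVec x = fun i => (Tᵀ * M) i j := by
    intro j
    have : (fun i => (Tᵀ * M) i j) ∈ LinearMap.range (Yᵀ).mulVecLin := by
      refine ⟨fun k => R k j, ?_⟩
      ext i
      rw [Matrix.mulVecLin_apply, hTM]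
      simp only [Matrix.mulVec, dotProduct, Matrix.mul_apply, Matrix.transpose_apply]
    rw [← range_tmul] at this
    obtain ⟨x, hx⟩ := this
    exact ⟨x, hx⟩
  choose X hX using hcol
  refine ⟨Matrix.of fun i j => X j i, ?_⟩
  ext i j
  have := congrFun (hX j) i
  simp only [Matrix.mulVec, dotProduct] at this
  rw [hG]
  simpa [Matrix.mul_apply] using this

lemma integrable_xjk {n : ℕ} {μ : Measure (Fin n → ℝ)}
    (hmoment : Integrable (fun x => ∑ i, x i ^ 2) μ) (j k : Fin n) :
    Integrable (fun x : Fin n → ℝ => x j * x k) μ := by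
  refine Integrable.mono' (hmoment.const_mul 2)
    (((measurable_pi_apply j).mul (measurable_pi_apply k)).aestronglyMeasurable)
    (Filter.Eventually.of_forall fun x => ?_)
  have hj : x j ^ 2 ≤ ∑ i, x i ^ 2 :=
    Finset.single_le_sum (fun i _ => sq_nonneg (x i)) (Finset.mem_univ j)
  have hk : x k ^ 2 ≤ ∑ i, x i ^ 2 :=
    Finset.single_le_sum (fun i _ => sq_nonneg (x i)) (Finset.mem_univ k)
  have habs : |x j * x k| ≤ x j ^ 2 + x k ^ 2 := by
    rw [abs_le]
    constructor <;> nlinarith [sq_nonneg (x j + x k), sq_nonneg (x j - x k)]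
  calc ‖x j * x k‖ = |x j * x k| := rfl
    _ ≤ x j ^ 2 + x k ^ 2 := habs
    _ ≤ 2 * ∑ i, x i ^ 2 := by linarith

lemma sqNorm_mulVec_eq {m' n : ℕ} (B : Matrix (Fin m') (Fin n) ℝ) (x : Fin n → ℝ) :
    sqNorm (B.mulVec x) = ∑ j, ∑ k, (∑ i, B i j * B i k) * (x j * x k) := by
  unfold sqNorm Matrix.mulVec dotProduct
  have h : ∀ i : Fin m', (∑ j, B i j * x j) ^ 2
      = ∑ j, ∑ k, (B i j * B i k) * (x j * x k) := by
    intro i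
    rw [sq, Finset.sum_mul_sum]
    exact Finset.sum_congr rfl fun j _ => Finset.sum_congr rfl fun k _ => by ring
  rw [Finset.sum_congr rfl fun i _ => h i, Finset.sum_comm]
  refine Finset.sum_congr rfl fun j _ => ?_
  rw [Finset.sum_comm]
  refine Finset.sum_congr rfl fun k _ => ?_
  rw [Finset.sum_mul]

lemma integrable_sqNorm {n : ℕ} {μ : Measure (Fin n → ℝ)}
    (hmoment : Integrable (fun x => ∑ i, x i ^ 2) μ)
    {m' : ℕ} (B : Matrix (Fin m') (Fin n) ℝ) :
    Integrable (fun x => sqNorm (B.mulVec x)) μ := by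
  have h : (fun x => sqNorm (B.mulVec x))
      = fun x => ∑ j, ∑ k, (∑ i, B i j * B i k) * (x j * x k) := by
    funext x; exact sqNorm_mulVec_eq B x
  rw [h]
  exact integrable_finset_sum _ fun j _ => integrable_finset_sum _ fun k _ =>
    (integrable_xjk hmoment j k).const_mul _

lemma Qm_expand {m' n : ℕ} (M : Matrix (Fin n) (Fin n) ℝ) (B : Matrix (Fin m') (Fin n) ℝ) :
    Qm M B = ∑ j, ∑ k, (∑ i, B i j * B i k) * M j k := by
  simp only [Qm, Matrix.mulVec, dotProduct, Finset.mul_sum, Finset.sum_mul]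
  conv_lhs => rw [Finset.sum_comm]
  refine Finset.sum_congr rfl fun j _ => ?_
  conv_lhs => rw [Finset.sum_comm]
  exact Finset.sum_congr rfl fun k _ => Finset.sum_congr rfl fun i _ => by ring

lemma integral_sqNorm {n : ℕ} {μ : Measure (Fin n → ℝ)}
    (hmoment : Integrable (fun x => ∑ i, x i ^ 2) μ)
    {m' : ℕ} (B : Matrix (Fin m') (Fin n) ℝ) :
    ∫ x, sqNorm (B.mulVec x) ∂μ = Qm (momM μ) B := by
  have h1 : ∫ x, sqNorm (B.mulVec x) ∂μ
      = ∑ j, ∑ k, (∑ i, B i j * B i k) * (momM μ) j k := by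
    simp_rw [sqNorm_mulVec_eq B]
    rw [integral_finset_sum _ fun j _ => integrable_finset_sum _ fun k _ =>
      (integrable_xjk hmoment j k).const_mul _]
    refine Finset.sum_congr rfl fun j _ => ?_
    rw [integral_finset_sum _ fun k _ => (integrable_xjk hmoment j k).const_mul _]
    refine Finset.sum_congr rfl fun k _ => ?_
    rw [integral_const_mul]
    rfl
  rw [h1, Qm_expand]

lemma momM_posSemidef {n : ℕ} {μ : Measure (Fin n → ℝ)}
    (hmoment : Integrable (fun x => ∑ i, x i ^ 2) μ) :
    (momM μ).PosSemidef := by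
  refine Matrix.PosSemidef.of_dotProduct_mulVec_nonneg ?_ ?_
  · ext j k
    simp only [momM, Matrix.conjTranspose_apply, Matrix.of_apply, star_trivial]
    exact integral_congr_ae (Filter.Eventually.of_forall fun x => mul_comm _ _)
  · intro v
    have h := integral_sqNorm hmoment (Matrix.of fun (_ : Fin 1) j => v j)
    have hnn : 0 ≤ ∫ x, sqNorm ((Matrix.of fun (_ : Fin 1) j => v j).mulVec x) ∂μ :=
      integral_nonneg fun x => Finset.sum_nonneg fun i _ => sq_nonneg _
    rw [h] at hnn
    rw [Qm, Fin.sum_univ_one] at hnn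
    exact hnn

lemma lrProd_eq {m n r : ℕ} (b : ℕ) (U : Matrix (Fin m) (Fin r) ℝ)
    (V : Matrix (Fin n) (Fin r) ℝ) :
    lrProd b U V
      = U * (Matrix.diagonal fun t : Fin r => if (t : ℕ) < b then (1:ℝ) else 0) * Vᵀ := by
  ext i j
  simp only [lrProd, Matrix.of_apply]
  rw [Matrix.mul_apply]
  simp only [Matrix.mul_diagonal, Matrix.transpose_apply]
  refine Finset.sum_congr rfl fun t _ => ?_
  by_cases h : (t : ℕ) < b <;> simp [h]

lemma lrProd_mul {m m' n n' r : ℕ} (b : ℕ) (P : Matrix (Fin m') (Fin m) ℝ)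
    (U : Matrix (Fin m) (Fin r) ℝ) (Q : Matrix (Fin n') (Fin n) ℝ)
    (V : Matrix (Fin n) (Fin r) ℝ) :
    lrProd b (P * U) (Q * V) = P * lrProd b U V * Qᵀ := by
  rw [lrProd_eq, lrProd_eq, Matrix.transpose_mul]
  simp only [Matrix.mul_assoc]

lemma lrProd_mulLeft {m m' n r : ℕ} (b : ℕ) (P : Matrix (Fin m') (Fin m) ℝ)
    (U : Matrix (Fin m) (Fin r) ℝ) (V : Matrix (Fin n) (Fin r) ℝ) :
    lrProd b (P * U) V = P * lrProd b U V := by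
  rw [lrProd_eq, lrProd_eq]
  simp only [Matrix.mul_assoc]

lemma lrProd_mulRight {m n n' r : ℕ} (b : ℕ) (U : Matrix (Fin m) (Fin r) ℝ)
    (Q : Matrix (Fin n') (Fin n) ℝ) (V : Matrix (Fin n) (Fin r) ℝ) :
    lrProd b U (Q * V) = lrProd b U V * Qᵀ := by
  rw [lrProd_eq, lrProd_eq, Matrix.transpose_mul]
  simp only [Matrix.mul_assoc]

lemma Qm_expand' {m' n : ℕ} (M : Matrix (Fin n) (Fin n) ℝ) (B : Matrix (Fin m') (Fin n) ℝ) :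
    Qm M B = ∑ j, ∑ k, (Bᵀ * B) j k * M j k := by
  rw [Qm_expand]
  exact Finset.sum_congr rfl fun j _ => Finset.sum_congr rfl fun k _ => by
    simp [Matrix.mul_apply, Matrix.transpose_apply]

lemma Qm_mul_left_orth {m1 m2 n : ℕ} (M : Matrix (Fin n) (Fin n) ℝ)
    (C : Matrix (Fin m1) (Fin m2) ℝ) (hC : Cᵀ * C = 1)
    (X : Matrix (Fin m2) (Fin n) ℝ) : Qm M (C * X) = Qm M X := by
  have h : (C * X)ᵀ * (C * X) = Xᵀ * X := by
    rw [Matrix.transpose_mul, Matrix.mul_assoc, ← Matrix.mul_assoc Cᵀ, hC, Matrix.one_mul]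
  rw [Qm_expand', Qm_expand', h]

lemma dot_symm {n : ℕ} (M : Matrix (Fin n) (Fin n) ℝ) (hMsym : Mᵀ = M)
    (x y : Fin n → ℝ) : x ⬝ᵥ M.mulVec y = y ⬝ᵥ M.mulVec x := by
  rw [dotProduct_mulVec, ← Matrix.mulVec_transpose, hMsym, dotProduct_comm]

/-- The key pointwise comparison: projecting onto the column space of `T` (w.r.t. the
positive semidefinite form `M`) does not increase the `M`-distance to points of the space. -/
lemma proj_le {n m' : ℕ} (M : Matrix (Fin n) (Fin n) ℝ) (hM : M.PosSemidef)
    (T : Matrix (Fin n) (Fin m') ℝ) (X : Matrix (Fin m') (Fin n) ℝ)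
    (hX : Tᵀ * M * T * X = Tᵀ * M) (w : Fin n → ℝ) (z : Fin m' → ℝ) :
    ((T * X).mulVec w - T.mulVec z) ⬝ᵥ M.mulVec ((T * X).mulVec w - T.mulVec z)
      ≤ (w - T.mulVec z) ⬝ᵥ M.mulVec (w - T.mulVec z) := by
  have hMsym : Mᵀ = M := by
    have h := hM.1
    rwa [Matrix.IsHermitian, Matrix.conjTranspose_eq_transpose_of_trivial] at h
  set d : Fin n → ℝ := w - (T * X).mulVec w with hd
  set c : Fin n → ℝ := (T * X).mulVec w - T.mulVec z with hc
  have hdc : w - T.mulVec z = d + c := by rw [hd, hc]; abel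
  have hker : (Tᵀ * M).mulVec d = 0 := by
    rw [hd, Matrix.mulVec_sub, Matrix.mulVec_mulVec, ← Matrix.mul_assoc, sub_eq_zero, hX]
  have hcross : c ⬝ᵥ M.mulVec d = 0 := by
    have hcu : c = T.mulVec (X.mulVec w - z) := by
      rw [hc, Matrix.mulVec_sub, Matrix.mulVec_mulVec]
    rw [hcu, dotProduct_comm, dotProduct_mulVec, ← Matrix.mulVec_transpose,
      Matrix.mulVec_mulVec, hker, zero_dotProduct]
  have hcross' : d ⬝ᵥ M.mulVec c = 0 := by rw [dot_symm M hMsym, hcross]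
  have hdpos : 0 ≤ d ⬝ᵥ M.mulVec d := by simpa [star_trivial] using hM.dotProduct_mulVec_nonneg d
  rw [hdc, Matrix.mulVec_add, dotProduct_add, add_dotProduct, add_dotProduct, hcross, hcross']
  linarith

lemma row_mul_transpose {a b c : ℕ} (A : Matrix (Fin a) (Fin b) ℝ)
    (P : Matrix (Fin c) (Fin b) ℝ) (i : Fin a) : (A * Pᵀ) i = P.mulVec (A i) := by
  funext j
  simp only [Matrix.mul_apply, Matrix.mulVec, dotProduct, Matrix.transpose_apply]
  exact Finset.sum_congr rfl fun k _ => mul_comm _ _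

lemma row_transpose {a b : ℕ} (T : Matrix (Fin a) (Fin b) ℝ) (i : Fin b) :
    Tᵀ i = T.mulVec (Pi.single i 1) := by
  funext j
  simp [Matrix.mulVec, dotProduct, Matrix.transpose_apply, Pi.single_apply,
    mul_ite, Finset.sum_ite_eq']

/-- Rewriting of both objectives as weighted sums of quadratic forms. -/
lemma obj_rewrite {n r : ℕ} {μ : Measure (Fin n → ℝ)}
    (hmoment : Integrable (fun x => ∑ i, x i ^ 2) μ) (p : Fin r → ℝ)
    {m' : ℕ} (D : Fin r → Matrix (Fin m') (Fin n) ℝ) :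
    ∫ x, ∑ b : Fin r, p b * sqNorm ((D b).mulVec x) ∂μ
      = ∑ b : Fin r, p b * Qm (momM μ) (D b) := by
  rw [integral_finset_sum _ fun b _ => (integrable_sqNorm hmoment (D b)).const_mul (p b)]
  exact Finset.sum_congr rfl fun b _ => by rw [integral_const_mul, integral_sqNorm hmoment]

/-- With `A = Ũ Σ Ṽᵀ` an SVD, `r = min m n`, `μ` a probability measure with
finite second moment and positive weights summing to one: if `(Ū,V̄)` is a global
minimizer of `H`, then `(U*, V*) := (Ũ Ū, Ṽ Σᵀ V̄)` is a global minimizer of `F`. -/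
theorem stmt3 {m n : ℕ} (A : Matrix (Fin m) (Fin n) ℝ)
    (Ut : Matrix (Fin m) (Fin m) ℝ) (S : Matrix (Fin m) (Fin n) ℝ)
    (Vt : Matrix (Fin n) (Fin n) ℝ)
    (hUorth : Utᵀ * Ut = 1) (hUorth' : Ut * Utᵀ = 1)
    (hVorth : Vtᵀ * Vt = 1) (hVorth' : Vt * Vtᵀ = 1)
    (hSdiag : ∀ (i : Fin m) (j : Fin n), (i : ℕ) ≠ (j : ℕ) → S i j = 0)
    (hSnonneg : ∀ (i : Fin m) (j : Fin n), (i : ℕ) = (j : ℕ) → 0 ≤ S i j)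
    (hSmono : ∀ (i i' : Fin m) (j j' : Fin n), (i : ℕ) = (j : ℕ) → (i' : ℕ) = (j' : ℕ) →
      (i : ℕ) ≤ (i' : ℕ) → S i' j' ≤ S i j)
    (hA : A = Ut * S * Vtᵀ)
    (μ : Measure (Fin n → ℝ)) [IsProbabilityMeasure μ]
    (hmoment : Integrable (fun x => ∑ i, x i ^ 2) μ)
    (p : Fin (min m n) → ℝ) (hp : ∀ b, 0 < p b) (hpsum : ∑ b, p b = 1)
    (Ubar Vbar : Matrix (Fin m) (Fin (min m n)) ℝ)
    (hmin : ∀ (U' V' : Matrix (Fin m) (Fin (min m n)) ℝ),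
      projObj S Vt μ p Ubar Vbar ≤ projObj S Vt μ p U' V') :
    ∀ (U' : Matrix (Fin m) (Fin (min m n)) ℝ) (V' : Matrix (Fin n) (Fin (min m n)) ℝ),
      maestroObj A μ p (Ut * Ubar) (Vt * Sᵀ * Vbar) ≤ maestroObj A μ p U' V' := by
  intro U' V'
  set Mμ := momM μ with hMμ
  have hMpsd : Mμ.PosSemidef := momM_posSemidef hmoment
  set T : Matrix (Fin n) (Fin m) ℝ := Vt * Sᵀ with hT
  have hTt : Tᵀ = S * Vtᵀ := by
    rw [hT, Matrix.transpose_mul, Matrix.transpose_transpose]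
  obtain ⟨X, hX⟩ := exists_proj Mμ hMpsd T
  -- objective rewrites
  have hmaestro : ∀ (U : Matrix (Fin m) (Fin (min m n)) ℝ)
      (V : Matrix (Fin n) (Fin (min m n)) ℝ),
      maestroObj A μ p U V
        = ∑ b : Fin (min m n), p b * Qm Mμ (lrProd ((b : ℕ) + 1) U V - A) := by
    intro U V
    unfold maestroObj
    have h : ∀ x : Fin n → ℝ, ∀ b : Fin (min m n),
        (lrProd ((b : ℕ) + 1) U V).mulVec x - A.mulVec x
          = (lrProd ((b : ℕ) + 1) U V - A).mulVec x := by
      intro x b; rw [Matrix.sub_mulVec]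
    simp_rw [h]
    exact obj_rewrite hmoment p _
  have hproj : ∀ (U V : Matrix (Fin m) (Fin (min m n)) ℝ),
      projObj S Vt μ p U V
        = ∑ b : Fin (min m n), p b * Qm Mμ ((lrProd ((b : ℕ) + 1) U V - 1) * S * Vtᵀ) := by
    intro U V
    unfold projObj
    simp_rw [Matrix.mulVec_mulVec, Matrix.mul_assoc]
    exact obj_rewrite hmoment p _
  -- Step 2 : equality at the transformed minimizer
  have step2 : maestroObj A μ p (Ut * Ubar) (Vt * Sᵀ * Vbar) = projObj S Vt μ p Ubar Vbar := by
    rw [hmaestro, hproj]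
    refine Finset.sum_congr rfl fun b _ => ?_
    congr 1
    have h1 : lrProd ((b : ℕ) + 1) (Ut * Ubar) (Vt * Sᵀ * Vbar)
        = Ut * (lrProd ((b : ℕ) + 1) Ubar Vbar * (S * Vtᵀ)) := by
      rw [lrProd_mulLeft, lrProd_mulRight, Matrix.transpose_mul, Matrix.transpose_transpose]
    have h2 : lrProd ((b : ℕ) + 1) (Ut * Ubar) (Vt * Sᵀ * Vbar) - A
        = Ut * ((lrProd ((b : ℕ) + 1) Ubar Vbar - 1) * S * Vtᵀ) := by
      rw [h1, hA, Matrix.sub_mul, Matrix.sub_mul, Matrix.one_mul, Matrix.mul_sub]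
      simp only [Matrix.mul_assoc]
    rw [h2, Qm_mul_left_orth Mμ Ut hUorth]
  -- Step 3 : domination at an arbitrary point
  set C : Matrix (Fin m) (Fin (min m n)) ℝ := Utᵀ * U' with hC
  set Vb' : Matrix (Fin m) (Fin (min m n)) ℝ := X * V' with hVb'
  have step3 : projObj S Vt μ p C Vb' ≤ maestroObj A μ p U' V' := by
    rw [hmaestro, hproj]
    refine Finset.sum_le_sum fun b _ => ?_
    refine mul_le_mul_of_nonneg_left ?_ (le_of_lt (hp b))
    -- rewrite the maestro-side matrix
    have hU' : U' = Ut * C := by rw [hC, ← Matrix.mul_assoc, hUorth', Matrix.one_mul]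
    have hmm : lrProd ((b : ℕ) + 1) U' V' - A
        = Ut * (lrProd ((b : ℕ) + 1) C V' - Tᵀ) := by
      have h5 : lrProd ((b : ℕ) + 1) U' V' = Ut * lrProd ((b : ℕ) + 1) C V' := by
        conv_lhs => rw [hU']
        rw [lrProd_mulLeft]
      rw [h5, hA, hTt, Matrix.mul_sub]
      simp only [Matrix.mul_assoc]
    -- rewrite the proj-side matrix
    have hpp : (lrProd ((b : ℕ) + 1) C Vb' - 1) * S * Vtᵀ
        = lrProd ((b : ℕ) + 1) C ((T * X) * V') - Tᵀ := by
      rw [Matrix.sub_mul, Matrix.sub_mul, Matrix.one_mul,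
        Matrix.mul_assoc (lrProd ((b : ℕ) + 1) C Vb') S Vtᵀ, ← hTt,
        ← lrProd_mulRight, hVb', ← Matrix.mul_assoc]
    rw [hmm, hpp, Qm_mul_left_orth Mμ Ut hUorth]
    -- now compare row by row
    unfold Qm
    refine Finset.sum_le_sum fun i _ => ?_
    have hrow1 : (lrProd ((b : ℕ) + 1) C ((T * X) * V') - Tᵀ) i
        = (T * X).mulVec ((lrProd ((b : ℕ) + 1) C V') i) - T.mulVec (Pi.single i 1) := by
      have h4 : lrProd ((b : ℕ) + 1) C ((T * X) * V')
          = lrProd ((b : ℕ) + 1) C V' * (T * X)ᵀ := lrProd_mulRight _ C (T * X) V'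
      funext j
      rw [Matrix.sub_apply, h4]
      rw [congrFun (row_mul_transpose (lrProd ((b : ℕ) + 1) C V') (T * X) i) j,
        congrFun (row_transpose T i) j]
      rfl
    have hrow2 : (lrProd ((b : ℕ) + 1) C V' - Tᵀ) i
        = (lrProd ((b : ℕ) + 1) C V') i - T.mulVec (Pi.single i 1) := by
      funext j
      rw [Matrix.sub_apply, congrFun (row_transpose T i) j]
      rfl
    rw [hrow1, hrow2]
    exact proj_le Mμ hMpsd T X hX _ _
  calc maestroObj A μ p (Ut * Ubar) (Vt * Sᵀ * Vbar)
      = projObj S Vt μ p Ubar Vbar := step2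
    _ ≤ projObj S Vt μ p C Vb' := hmin C Vb'
    _ ≤ maestroObj A μ p U' V' := step3

end
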